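/- Let f(z) = Σ a_n z^n and g(z) = Σ b_n z^n be power series with nonnegative real coefficients, each having at least one nonzero coefficient in positive degree, with radii of convergence ρ_f and ρ_g respectively. Then the radius of convergence of the product f·g equals min(ρ_f, ρ_g). -/

import Mathlib

open Filter Set
open scoped ENNReal BigOperators

/-- The log index of a sequence of nonnegative reals (dimensions of a graded
vector space): `limsup_i (log a_i)/i`, with the convention `log 0 = -∞`,
computed in the extended reals. -/
noncomputable def logIndex (a : ℕ → ℝ) : EReal :=
  Filter.limsup (fun i => ENNReal.log (ENNReal.ofReal (a i)) / ((i : ℝ) : EReal)) Filter.atTop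

/-- The radius of convergence of `Σ a_i z^i`, via Cauchy–Hadamard:
`ρ = 1 / limsup a_i^{1/i}` in `ℝ≥0∞`. -/
noncomputable def radius (a : ℕ → ℝ) : ℝ≥0∞ :=
  1 / Filter.limsup (fun n => ENNReal.ofReal (a n ^ ((n : ℝ)⁻¹))) Filter.atTop

open scoped NNReal

/-!
With nonnegative coefficients `c (i + j) ≥ a i * b j`, so if `r < ρ_{fg}` then
`a i r^i * b k r^k` is bounded in `i` for a fixed `k` with `b k ≠ 0`, whence `r ≤ ρ_f`; likewise
`r ≤ ρ_g`. Conversely, for `r < min ρ_f ρ_g` both series converge absolutely at `r`, hence so does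
their Cauchy product, whose terms `c n r^n` are then bounded.
-/

section Radius

variable {a : ℕ → ℝ}

lemma norm_ofScalars_of_nonneg (ha : ∀ n, 0 ≤ a n) (n : ℕ) :
    ‖FormalMultilinearSeries.ofScalars ℝ a n‖ = a n := by
  rw [FormalMultilinearSeries.ofScalars_norm, Real.norm_of_nonneg (ha n)]

lemma radius_eq_radius_ofScalars (ha : ∀ n, 0 ≤ a n) :
    radius a = (FormalMultilinearSeries.ofScalars ℝ a).radius := by
  rw [FormalMultilinearSeries.radius_eq_liminf, radius, one_div, ENNReal.inv_limsup]
  refine liminf_congr (Eventually.of_forall fun n => ?_)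
  have hnorm : ‖FormalMultilinearSeries.ofScalars ℝ a n‖₊ = (a n).toNNReal := by
    ext
    rw [coe_nnnorm, norm_ofScalars_of_nonneg ha, Real.coe_toNNReal _ (ha n)]
  rw [hnorm, one_div, one_div, ENNReal.ofReal, Real.toNNReal_rpow_of_nonneg (ha n)]

lemma le_radius_of_bound (ha : ∀ n, 0 ≤ a n) (C : ℝ) {r : ℝ≥0}
    (h : ∀ n, a n * (r : ℝ) ^ n ≤ C) : (r : ℝ≥0∞) ≤ radius a := by
  rw [radius_eq_radius_ofScalars ha]
  exact FormalMultilinearSeries.le_radius_of_bound _ C fun n => by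
    simpa only [norm_ofScalars_of_nonneg ha] using h n

lemma exists_mul_pow_le_of_lt_radius (ha : ∀ n, 0 ≤ a n) {r : ℝ≥0}
    (h : (r : ℝ≥0∞) < radius a) : ∃ C > 0, ∀ n, a n * (r : ℝ) ^ n ≤ C := by
  rw [radius_eq_radius_ofScalars ha] at h
  simpa only [norm_ofScalars_of_nonneg ha] using
    FormalMultilinearSeries.norm_mul_pow_le_of_lt_radius _ h

lemma summable_mul_pow_of_lt_radius (ha : ∀ n, 0 ≤ a n) {r : ℝ≥0}
    (h : (r : ℝ≥0∞) < radius a) : Summable fun n => a n * (r : ℝ) ^ n := by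
  rw [radius_eq_radius_ofScalars ha] at h
  simpa only [norm_ofScalars_of_nonneg ha] using
    FormalMultilinearSeries.summable_norm_mul_pow _ h

end Radius

lemma radius_le_of_mul_le {u v c : ℕ → ℝ} (hu : ∀ n, 0 ≤ u n) (hc : ∀ n, 0 ≤ c n)
    (huv : ∀ i j, u i * v j ≤ c (i + j)) {k : ℕ} (hvk : 0 < v k) :
    radius c ≤ radius u := by
  refine ENNReal.le_of_forall_nnreal_lt fun r hr => ?_
  rcases eq_or_ne r 0 with rfl | hr0
  · simp
  have hrk : 0 < v k * (r : ℝ) ^ k := mul_pos hvk (pow_pos (by positivity) k)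
  obtain ⟨C, -, hC⟩ := exists_mul_pow_le_of_lt_radius hc hr
  refine le_radius_of_bound hu (C / (v k * (r : ℝ) ^ k)) fun n => ?_
  rw [le_div_iff₀ hrk]
  calc u n * (r : ℝ) ^ n * (v k * (r : ℝ) ^ k)
      = u n * v k * (r : ℝ) ^ (n + k) := by ring
    _ ≤ c (n + k) * (r : ℝ) ^ (n + k) := by gcongr; exact huv n k
    _ ≤ C := hC (n + k)

section CauchyProduct

variable {a b : ℕ → ℝ}

def cauchyProduct (a b : ℕ → ℝ) (n : ℕ) : ℝ :=
  ∑ p ∈ Finset.HasAntidiagonal.antidiagonal n, a p.1 * b p.2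

lemma cauchyProduct_nonneg (ha : ∀ n, 0 ≤ a n) (hb : ∀ n, 0 ≤ b n) (n : ℕ) :
    0 ≤ cauchyProduct a b n :=
  Finset.sum_nonneg fun p _ => mul_nonneg (ha p.1) (hb p.2)

lemma mul_le_cauchyProduct (ha : ∀ n, 0 ≤ a n) (hb : ∀ n, 0 ≤ b n) (i j : ℕ) :
    a i * b j ≤ cauchyProduct a b (i + j) :=
  Finset.single_le_sum (f := fun p : ℕ × ℕ => a p.1 * b p.2)
    (fun p _ => mul_nonneg (ha p.1) (hb p.2))
    (Finset.HasAntidiagonal.mem_antidiagonal.mpr (rfl : (i, j).1 + (i, j).2 = i + j))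

lemma cauchyProduct_mul_pow (a b : ℕ → ℝ) (r : ℝ) (n : ℕ) :
    cauchyProduct a b n * r ^ n =
      cauchyProduct (fun i => a i * r ^ i) (fun j => b j * r ^ j) n := by
  rw [cauchyProduct, cauchyProduct, Finset.sum_mul]
  refine Finset.sum_congr rfl fun p hp => ?_
  rw [← Finset.HasAntidiagonal.mem_antidiagonal.mp hp, pow_add]
  ring

lemma summable_cauchyProduct_of_nonneg (ha : Summable a) (hb : Summable b) (ha0 : 0 ≤ a)
    (hb0 : 0 ≤ b) : Summable (cauchyProduct a b) :=
  summable_sum_mul_antidiagonal_of_summable_mul (f := a) (g := b) (ha.mul_of_nonneg hb ha0 hb0)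

lemma min_radius_le_radius_cauchyProduct (ha : ∀ n, 0 ≤ a n) (hb : ∀ n, 0 ≤ b n) :
    min (radius a) (radius b) ≤ radius (cauchyProduct a b) := by
  refine ENNReal.le_of_forall_nnreal_lt fun r hr => ?_
  rw [lt_min_iff] at hr
  have hterm_nonneg : ∀ (u : ℕ → ℝ), (∀ n, 0 ≤ u n) → 0 ≤ fun n => u n * (r : ℝ) ^ n :=
    fun u hu n => mul_nonneg (hu n) (pow_nonneg r.coe_nonneg n)
  have hc := cauchyProduct_nonneg ha hb
  have hsum : Summable fun n => cauchyProduct a b n * (r : ℝ) ^ n := by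
    simp only [cauchyProduct_mul_pow]
    exact summable_cauchyProduct_of_nonneg (summable_mul_pow_of_lt_radius ha hr.1)
      (summable_mul_pow_of_lt_radius hb hr.2) (hterm_nonneg a ha) (hterm_nonneg b hb)
  exact le_radius_of_bound hc _ fun n => hsum.le_tsum n fun j _ => hterm_nonneg _ hc j

end CauchyProduct

/-- If `f` and `g` are power series with nonnegative coefficients, each having a
nonzero coefficient in positive degree, then the radius of convergence of the
product `f·g` equals `min(ρ_f, ρ_g)`. -/
theorem stmt11 (a b : ℕ → ℝ) (ha : ∀ n, 0 ≤ a n) (hb : ∀ n, 0 ≤ b n)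
    (hane : ∃ n, 1 ≤ n ∧ a n ≠ 0) (hbne : ∃ n, 1 ≤ n ∧ b n ≠ 0) :
    radius (fun n => ∑ p ∈ Finset.HasAntidiagonal.antidiagonal n, a p.1 * b p.2) =
      min (radius a) (radius b) := by
  obtain ⟨m, -, ham⟩ := hane
  obtain ⟨k, -, hbk⟩ := hbne
  have hc := cauchyProduct_nonneg ha hb
  change radius (cauchyProduct a b) = _
  refine le_antisymm (le_min ?_ ?_) (min_radius_le_radius_cauchyProduct ha hb)
  · exact radius_le_of_mul_le ha hc (mul_le_cauchyProduct ha hb) ((hb k).lt_of_ne' hbk)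
  · refine radius_le_of_mul_le hb hc (fun i j => ?_) ((ha m).lt_of_ne' ham)
    rw [mul_comm, add_comm]
    exact mul_le_cauchyProduct ha hb j i
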